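/- Let ε, η ∈ (0, 1) and let E ⊆ ℝ^N be a finite set with |E| = p. Let Φ ∈ ℝ^{m×N} be a fixed matrix having the (k, δ)-restricted isometry property for some k ≥ 40·log(4p/η) and δ ≤ ε/4. Let ξ ∈ {−1, 1}^N be a Rademacher vector and D_ξ the N × N diagonal matrix with diagonal ξ. Then with probability at least 1 − η over ξ, the inequality (1 − ε)‖x‖₂² ≤ ‖Φ D_ξ x‖₂² ≤ (1 + ε)‖x‖₂² holds simultaneously for all x ∈ E. -/

import Mathlib

open MeasureTheory ProbabilityTheory

noncomputable section

/-- A measurable-space structure on matrices, inherited from the product σ-algebra. -/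
instance matrixMeasurableSpace {m n α : Type*} [MeasurableSpace α] :
    MeasurableSpace (Matrix m n α) :=
  (inferInstance : MeasurableSpace (m → n → α))

/-- The squared Euclidean norm ‖x‖₂² of a vector `x ∈ ℝ^d`. -/
def sqNorm {d : ℕ} (x : Fin d → ℝ) : ℝ := ∑ i, x i ^ 2

/-- A random matrix `A ∈ ℝ^{m×N}` is a `(p, ε, η)`-Johnson–Lindenstrauss embedding if for every
set `E ⊆ ℝ^N` of cardinality `p`, with probability at least `1 - η` one has
`(1 - ε)‖x‖₂² ≤ ‖Ax‖₂² ≤ (1 + ε)‖x‖₂²` simultaneously for all `x ∈ E`. -/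
def IsJLE {Ω : Type*} [MeasurableSpace Ω] (μ : Measure Ω) {m N : ℕ}
    (A : Ω → Matrix (Fin m) (Fin N) ℝ) (p : ℕ) (ε η : ℝ) : Prop :=
  ∀ E : Finset (Fin N → ℝ), E.card = p →
    1 - η ≤ (μ {ω | ∀ x ∈ E,
      (1 - ε) * sqNorm x ≤ sqNorm ((A ω).mulVec x) ∧
      sqNorm ((A ω).mulVec x) ≤ (1 + ε) * sqNorm x}).toReal


/-- A matrix `Φ ∈ ℝ^{m×N}` has the `(k, δ)`-restricted isometry property if it preserves
the squared norm of every `k`-sparse vector up to `1 ± δ`. -/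
def HasRIP {m N : ℕ} (Φ : Matrix (Fin m) (Fin N) ℝ) (k : ℕ) (δ : ℝ) : Prop :=
  ∀ x : Fin N → ℝ, (Finset.univ.filter fun i => x i ≠ 0).card ≤ k →
    (1 - δ) * sqNorm x ≤ sqNorm (Φ.mulVec x) ∧ sqNorm (Φ.mulVec x) ≤ (1 + δ) * sqNorm x

/-- `ξ` is a Rademacher vector: its entries are independent, each taking the values `1` and
`-1` with probability `1/2` each. -/
def IsRademacher {Ω : Type*} [MeasurableSpace Ω] (μ : Measure Ω) {N : ℕ}
    (ξ : Ω → Fin N → ℝ) : Prop :=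
  Measurable ξ ∧
  iIndepFun (fun (i : Fin N) (ω : Ω) => ξ ω i) μ ∧
  ∀ i, (μ {ω | ξ ω i = 1}).toReal = 1/2 ∧ (μ {ω | ξ ω i = -1}).toReal = 1/2

/-!
Fix a unit vector `x`, sort its coordinates by decreasing modulus and cut them into blocks
`B_0, B_1, …` of `h = k / 2` coordinates. Writing `Y_t = Φ D_ξ x_{B_t}` and `V_t = ∑_{s<t} Y_s`,
`‖Φ D_ξ x‖² = ∑ₜ ‖Y_t‖² + ∑ₜ 2 ⟪V_t, Y_t⟫`. The RIP on single blocks puts the first sum within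
`δ` of `1`. The second sum is a martingale in the signs taken block by block, and since `x_j²`
for `j ∈ B_t` is at most the mean of `x_i²` over `B_{t-1}`, its quadratic variation is at most
`4 / h` times `Q = ∑ₜ ‖x_{B_{t-1}}‖² ‖(Φᵀ V_t)|_{B_t}‖²`. Built up along the blocks, `Q` is again
a martingale plus a drift of total size `δ²`, both controlled by the RIP on pairs of disjoint
blocks. Stopping when `Q` exceeds `3 δ²` and applying Azuma's inequality to both martingales,
`x` is distorted by more than `4 δ` with probability at most `3 exp (-h / 6)`; a union bound
over `E` concludes.
-/
open Finset Matrix Real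

lemma sqNorm_eq_dotProduct {d : ℕ} (x : Fin d → ℝ) : sqNorm x = x ⬝ᵥ x := by
  simp only [sqNorm, dotProduct, sq]

lemma sqNorm_nonneg {d : ℕ} (x : Fin d → ℝ) : 0 ≤ sqNorm x :=
  sum_nonneg fun _ _ => sq_nonneg _

lemma sqNorm_add {d : ℕ} (u v : Fin d → ℝ) :
    sqNorm (u + v) = sqNorm u + 2 * (u ⬝ᵥ v) + sqNorm v := by
  simp only [sqNorm_eq_dotProduct, add_dotProduct, dotProduct_add, dotProduct_comm v u]
  ring

lemma sqNorm_sub {d : ℕ} (u v : Fin d → ℝ) :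
    sqNorm (u - v) = sqNorm u - 2 * (u ⬝ᵥ v) + sqNorm v := by
  simp only [sqNorm_eq_dotProduct, sub_dotProduct, dotProduct_sub, dotProduct_comm v u]
  ring

lemma sqNorm_smul {d : ℕ} (c : ℝ) (x : Fin d → ℝ) : sqNorm (c • x) = c ^ 2 * sqNorm x := by
  simp only [sqNorm_eq_dotProduct, smul_dotProduct, dotProduct_smul, smul_eq_mul]
  ring

lemma sqNorm_ite {d : ℕ} (p : Fin d → Prop) [DecidablePred p] (f : Fin d → ℝ) :
    sqNorm (fun j => if p j then f j else 0) = ∑ j with p j, f j ^ 2 := by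
  simp only [sqNorm, sum_filter, ite_pow, ne_eq, OfNat.ofNat_ne_zero, not_false_eq_true,
    zero_pow]

lemma dotProduct_eq_zero_of_disjoint {d : ℕ} {u v : Fin d → ℝ} {A B : Finset (Fin d)}
    (hu : Function.support u ⊆ A) (hv : Function.support v ⊆ B) (hAB : Disjoint A B) :
    u ⬝ᵥ v = 0 := by
  refine sum_eq_zero fun j _ => ?_
  by_cases hj : j ∈ A
  · simp [Function.support_subset_iff'.1 hv j (disjoint_left.1 hAB hj)]
  · simp [Function.support_subset_iff'.1 hu j hj]

lemma support_ite_subset {d : ℕ} (p : Fin d → Prop) [DecidablePred p] (f : Fin d → ℝ) :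
    Function.support (fun j => if p j then f j else 0) ⊆ ↑({j | p j} : Finset (Fin d)) :=
  fun j hj => by
    by_contra h
    exact hj (if_neg fun hp => h (by simpa using hp))

lemma sum_sq_sum_mul_le {d : ℕ} {κ : Type*} (T : Finset κ) {c : κ → ℝ} (hc : ∀ t ∈ T, 0 ≤ c t)
    (q : κ → Fin d → ℝ) (B : Finset (Fin d)) :
    ∑ j ∈ B, (∑ t ∈ T, c t * q t j) ^ 2 ≤ (∑ t ∈ T, c t) * ∑ t ∈ T, c t * ∑ j ∈ B, q t j ^ 2 := by
  calc ∑ j ∈ B, (∑ t ∈ T, c t * q t j) ^ 2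
      ≤ ∑ j ∈ B, (∑ t ∈ T, c t) * ∑ t ∈ T, c t * q t j ^ 2 :=
        sum_le_sum fun j _ => sum_sq_le_sum_mul_sum_of_sq_le_mul T hc
          (fun t ht => mul_nonneg (hc t ht) (sq_nonneg _)) fun t _ => by rw [mul_pow]; nlinarith
    _ = (∑ t ∈ T, c t) * ∑ t ∈ T, c t * ∑ j ∈ B, q t j ^ 2 := by
        rw [← mul_sum, sum_comm]
        simp only [mul_sum]

section Azuma

def bsign (b : Bool) : ℝ := if b then 1 else -1

lemma bsign_sq (b : Bool) : bsign b ^ 2 = 1 := by cases b <;> norm_num [bsign]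

lemma bsign_not (b : Bool) : bsign (!b) = -bsign b := by cases b <;> norm_num [bsign]

lemma bsign_injective : Function.Injective bsign := by
  intro a b; cases a <;> cases b <;> norm_num [bsign]

variable {ι : Type*} {α : Sort*}

def DependsOnlyBelow (ρ : ι → ℕ) (r : ℕ) (f : (ι → Bool) → α) : Prop :=
  ∀ σ σ', (∀ i, ρ i < r → σ i = σ' i) → f σ = f σ'

lemma DependsOnlyBelow.mono {ρ : ι → ℕ} {r r' : ℕ} {f : (ι → Bool) → α}
    (hf : DependsOnlyBelow ρ r f) (hr : r ≤ r') : DependsOnlyBelow ρ r' f :=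
  fun σ σ' h => hf σ σ' fun i hi => h i (hi.trans_le hr)

def IsPredictable (ρ : ι → ℕ) (γ : ι → (ι → Bool) → ℝ) : Prop :=
  ∀ j, DependsOnlyBelow ρ (ρ j) (γ j)

lemma IsPredictable.neg {ρ : ι → ℕ} {γ : ι → (ι → Bool) → ℝ} (hγ : IsPredictable ρ γ) :
    IsPredictable ρ fun j σ => -γ j σ :=
  fun j σ σ' h => congrArg Neg.neg (hγ j σ σ' h)

lemma exp_sub_add_exp_neg_sub_le_two (c : ℝ) :
    exp (c - c ^ 2 / 2) + exp (-c - c ^ 2 / 2) ≤ 2 := by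
  calc exp (c - c ^ 2 / 2) + exp (-c - c ^ 2 / 2) = 2 * cosh c * exp (-(c ^ 2 / 2)) := by
        rw [cosh_eq, sub_eq_add_neg, exp_add, sub_eq_add_neg, exp_add]
        ring
    _ ≤ 2 * exp (c ^ 2 / 2) * exp (-(c ^ 2 / 2)) := by gcongr; exact cosh_le_exp_half_sq c
    _ = 2 := by rw [mul_assoc, ← exp_add, add_neg_cancel, exp_zero, mul_one]

variable [Fintype ι] [DecidableEq ι] {ρ : ι → ℕ} {γ : ι → (ι → Bool) → ℝ}

/-- The exponential supermartingale `exp (∑ σ_j γ_j - γ_j² / 2)` has mean at most one. -/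
theorem IsPredictable.sum_exp_le (hγ : IsPredictable ρ γ) (s : Finset ι) :
    ∑ σ : ι → Bool, exp (∑ j ∈ s, (bsign (σ j) * γ j σ - γ j σ ^ 2 / 2))
      ≤ 2 ^ Fintype.card ι := by
  induction s using Finset.strongInduction with
  | H s ih =>
  rcases s.eq_empty_or_nonempty with rfl | hne
  · simp
  -- peel off the last sign `σ j` and average it against its flip
  obtain ⟨j, hjs, hjmax⟩ := s.exists_max_image ρ hne
  set F : Finset ι → (ι → Bool) → ℝ :=
    fun t σ => exp (∑ i ∈ t, (bsign (σ i) * γ i σ - γ i σ ^ 2 / 2)) with hF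
  let flip : Equiv.Perm (ι → Bool) := Function.Involutive.toPerm
    (fun σ => Function.update σ j (!σ j)) fun σ => by ext i; by_cases hi : i = j <;> simp [hi]
  have flip_ne (σ : ι → Bool) {i : ι} (hi : i ≠ j) : flip σ i = σ i :=
    Function.update_of_ne hi _ _
  have hpair (σ : ι → Bool) : F s σ + F s (flip σ) ≤ 2 * F (s.erase j) σ := by
    have hγflip : ∀ i ∈ s, γ i (flip σ) = γ i σ := fun i hi =>
      hγ i _ _ fun i' hi' => flip_ne σ (by rintro rfl; exact (hjmax i hi).not_gt hi')
    have hrest : ∑ i ∈ s.erase j, (bsign (flip σ i) * γ i (flip σ) - γ i (flip σ) ^ 2 / 2)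
        = ∑ i ∈ s.erase j, (bsign (σ i) * γ i σ - γ i σ ^ 2 / 2) :=
      sum_congr rfl fun i hi => by
        rw [flip_ne σ (ne_of_mem_erase hi), hγflip i (mem_of_mem_erase hi)]
    have hj : flip σ j = !σ j := Function.update_self _ _ _
    simp only [hF, ← add_sum_erase s _ hjs, hrest, hj, bsign_not, hγflip j hjs, exp_add,
      ← add_mul]
    gcongr
    cases σ j
    · simpa [bsign, add_comm] using exp_sub_add_exp_neg_sub_le_two (γ j σ)
    · simpa [bsign] using exp_sub_add_exp_neg_sub_le_two (γ j σ)
  calc ∑ σ, F s σ = (∑ σ, F s σ + ∑ σ, F s (flip σ)) / 2 := by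
        rw [Equiv.sum_comp flip (F s)]; ring
    _ ≤ ∑ σ, F (s.erase j) σ := by
        rw [← sum_add_distrib, div_le_iff₀ two_pos, sum_mul]
        exact sum_le_sum fun σ _ => by linarith [hpair σ]
    _ ≤ 2 ^ Fintype.card ι := ih _ (erase_ssubset hjs)

/-- Azuma's inequality for predictable sums of Rademacher signs, in counting form. -/
theorem IsPredictable.card_le_sum_le (hγ : IsPredictable ρ γ) {u V : ℝ} (hu : 0 ≤ u)
    (hV : 0 < V) (hvar : ∀ σ, ∑ j, γ j σ ^ 2 ≤ V) :
    (#{σ | u ≤ ∑ j, bsign (σ j) * γ j σ} : ℝ) ≤ 2 ^ Fintype.card ι * exp (-(u ^ 2 / (2 * V))) := by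
  set lam := u / V
  have hlam : 0 ≤ lam := div_nonneg hu hV.le
  have hscaled : IsPredictable ρ fun j σ => lam * γ j σ :=
    fun j σ σ' h => congrArg (lam * ·) (hγ j σ σ' h)
  have hpt : ∀ σ ∈ ({σ | u ≤ ∑ j, bsign (σ j) * γ j σ} : Finset (ι → Bool)),
      exp (u ^ 2 / (2 * V)) ≤ exp (∑ j, (bsign (σ j) * (lam * γ j σ) - (lam * γ j σ) ^ 2 / 2)) := by
    intro σ hσ
    have hsum := (mem_filter.1 hσ).2
    have hlin : ∑ j, bsign (σ j) * (lam * γ j σ) = lam * ∑ j, bsign (σ j) * γ j σ := by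
      rw [mul_sum]; exact sum_congr rfl fun j _ => by ring
    have hquad : ∑ j, (lam * γ j σ) ^ 2 / 2 = lam ^ 2 / 2 * ∑ j, γ j σ ^ 2 := by
      rw [mul_sum]; exact sum_congr rfl fun j _ => by ring
    rw [exp_le_exp, sum_sub_distrib, hlin, hquad]
    have h1 : lam * u ≤ lam * ∑ j, bsign (σ j) * γ j σ := mul_le_mul_of_nonneg_left hsum hlam
    have h2 : lam ^ 2 / 2 * ∑ j, γ j σ ^ 2 ≤ lam ^ 2 / 2 * V :=
      mul_le_mul_of_nonneg_left (hvar σ) (by positivity)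
    have h3 : u ^ 2 / (2 * V) = lam * u - lam ^ 2 / 2 * V := by
      simp only [lam]; field_simp; ring
    linarith
  have hcount := (card_nsmul_le_sum _ _ _ hpt).trans
    ((sum_le_sum_of_subset_of_nonneg (filter_subset _ _) fun σ _ _ => (exp_pos _).le).trans
      (hscaled.sum_exp_le univ))
  rw [nsmul_eq_mul, ← le_div_iff₀ (exp_pos _)] at hcount
  rwa [exp_neg, ← div_eq_mul_inv]

theorem IsPredictable.card_le_abs_sum_le (hγ : IsPredictable ρ γ) {u V : ℝ} (hu : 0 ≤ u)
    (hV : 0 < V) (hvar : ∀ σ, ∑ j, γ j σ ^ 2 ≤ V) :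
    (#{σ | u ≤ |∑ j, bsign (σ j) * γ j σ|} : ℝ)
      ≤ 2 * (2 ^ Fintype.card ι * exp (-(u ^ 2 / (2 * V)))) := by
  have hsub : ({σ | u ≤ |∑ j, bsign (σ j) * γ j σ|} : Finset (ι → Bool)) ⊆
      ({σ | u ≤ ∑ j, bsign (σ j) * γ j σ} : Finset (ι → Bool)) ∪
        ({σ | u ≤ ∑ j, bsign (σ j) * -γ j σ} : Finset (ι → Bool)) := fun σ hσ => by
    simpa only [mem_union, mem_filter, mem_univ, true_and, mul_neg, sum_neg_distrib, ← le_abs]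
      using hσ
  have hneg := hγ.neg.card_le_sum_le hu hV fun σ => by simpa only [neg_sq] using hvar σ
  calc (#{σ | u ≤ |∑ j, bsign (σ j) * γ j σ|} : ℝ)
      ≤ #{σ | u ≤ ∑ j, bsign (σ j) * γ j σ} + #{σ | u ≤ ∑ j, bsign (σ j) * -γ j σ} := by
        exact_mod_cast (card_le_card hsub).trans (card_union_le _ _)
    _ ≤ _ := by linarith [hγ.card_le_sum_le hu hV hvar]

end Azuma

section RIP

variable {m N k : ℕ} {Φ : Matrix (Fin m) (Fin N) ℝ} {δ : ℝ}

theorem HasRIP.mono (hΦ : HasRIP Φ k δ) {δ' : ℝ} (hδ : δ ≤ δ') : HasRIP Φ k δ' := by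
  intro x hx
  have := sqNorm_nonneg x
  obtain ⟨h1, h2⟩ := hΦ x hx
  constructor <;> nlinarith

theorem HasRIP.of_support_subset (hΦ : HasRIP Φ k δ) {x : Fin N → ℝ} {A : Finset (Fin N)}
    (hx : Function.support x ⊆ A) (hA : #A ≤ k) :
    (1 - δ) * sqNorm x ≤ sqNorm (Φ *ᵥ x) ∧ sqNorm (Φ *ᵥ x) ≤ (1 + δ) * sqNorm x :=
  hΦ x <| le_trans (card_le_card fun _ hj => hx (mem_filter.1 hj).2) hA

theorem HasRIP.two_mul_abs_dotProduct_le (hΦ : HasRIP Φ k δ) {u v : Fin N → ℝ}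
    {A B : Finset (Fin N)} (hu : Function.support u ⊆ A) (hv : Function.support v ⊆ B)
    (hAB : Disjoint A B) (hk : #A + #B ≤ k) :
    2 * |(Φ *ᵥ u) ⬝ᵥ (Φ *ᵥ v)| ≤ δ * (sqNorm u + sqNorm v) := by
  have huv : u ⬝ᵥ v = 0 := dotProduct_eq_zero_of_disjoint hu hv hAB
  have hcard : #(A ∪ B) ≤ k := (card_union_le A B).trans hk
  have hsupp (w : Fin N → ℝ) (hw : ∀ j, u j = 0 → v j = 0 → w j = 0) :
      Function.support w ⊆ ↑(A ∪ B) := fun j hj => by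
    by_contra hAB'
    simp only [coe_union, Set.mem_union, not_or] at hAB'
    exact hj (hw j (Function.notMem_support.1 fun h => hAB'.1 (hu h))
      (Function.notMem_support.1 fun h => hAB'.2 (hv h)))
  have hplus := hΦ.of_support_subset (hsupp (u + v) fun j h1 h2 => by simp [h1, h2]) hcard
  have hminus := hΦ.of_support_subset (hsupp (u - v) fun j h1 h2 => by simp [h1, h2]) hcard
  rw [mulVec_add, sqNorm_add, sqNorm_add, huv] at hplus
  rw [mulVec_sub, sqNorm_sub, sqNorm_sub, huv] at hminus
  rw [← abs_two, ← abs_mul, abs_le]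
  constructor <;> nlinarith

theorem HasRIP.sum_sq_vecMul_le (hΦ : HasRIP Φ k δ) {u : Fin N → ℝ} {A B : Finset (Fin N)}
    (hu : Function.support u ⊆ A) (hAB : Disjoint A B) (hk : #A + #B ≤ k) :
    ∑ j ∈ B, ((Φ *ᵥ u) ᵥ* Φ) j ^ 2 ≤ δ ^ 2 * sqNorm u := by
  -- test the RIP against the restriction `q` of `Φᵀ Φ u` to `B`: `⟪Φ q, Φ u⟫ = ‖q‖²`
  set q : Fin N → ℝ := fun j => if j ∈ B then ((Φ *ᵥ u) ᵥ* Φ) j else 0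
  have hq : Function.support q ⊆ B := fun j hj => by by_contra h; exact hj (if_neg h)
  have hqq : sqNorm q = ∑ j ∈ B, ((Φ *ᵥ u) ᵥ* Φ) j ^ 2 := by
    rw [sqNorm_ite, filter_mem_eq_inter, univ_inter]
  have hdot : (Φ *ᵥ q) ⬝ᵥ (Φ *ᵥ u) = sqNorm q := by
    rw [dotProduct_comm, dotProduct_mulVec]
    exact sum_congr rfl fun j _ => by by_cases hj : j ∈ B <;> simp [q, hj, sq]
  have ha := sqNorm_nonneg q
  have hb := sqNorm_nonneg u
  rw [← hqq]
  rcases le_or_gt δ 0 with hδ | hδ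
  · have := hΦ.two_mul_abs_dotProduct_le hq hu hAB.symm (by omega)
    rw [hdot, abs_of_nonneg ha] at this
    nlinarith
  · -- pairing `q` with `δ • u` makes the AM-GM bound sharp
    have := hΦ.two_mul_abs_dotProduct_le hq ((Function.support_const_smul_subset δ u).trans hu)
      hAB.symm (by omega)
    rw [mulVec_smul, dotProduct_smul, hdot, sqNorm_smul, smul_eq_mul, abs_mul,
      abs_of_pos hδ, abs_of_nonneg ha] at this
    refine le_of_mul_le_mul_left ?_ hδ
    nlinarith

end RIP

section Blocking

variable {N : ℕ}

def prevBlockEnergy (x : Fin N → ℝ) (blk : Fin N → ℕ) (t : ℕ) : ℝ :=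
  ∑ i with blk i + 1 = t, x i ^ 2

structure IsBlocking (x : Fin N → ℝ) (h : ℕ) (blk : Fin N → ℕ) : Prop where
  lt : ∀ j, blk j < N
  card_le : ∀ t, #{j | blk j = t} ≤ h
  mul_sq_le : ∀ j, blk j ≠ 0 → h * x j ^ 2 ≤ prevBlockEnergy x blk (blk j)

lemma le_card_filter_div_eq {h t : ℕ} (hh : 0 < h) (hN : (t + 1) * h ≤ N) :
    h ≤ #{i : Fin N | (i : ℕ) / h = t} := by
  have hN0 : 0 < N := by nlinarith
  calc h = #(Ico (t * h) (t * h + h)) := by simp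
    _ ≤ #{i : Fin N | (i : ℕ) / h = t} :=
        card_le_card_of_injOn (fun a => ⟨a % N, Nat.mod_lt _ hN0⟩)
          (fun a ha => by
            simp only [coe_Ico, Set.mem_Ico] at ha
            simp [Nat.mod_eq_of_lt (by nlinarith : a < N), Nat.div_eq_iff hh]
            omega)
          fun a ha b hb hab => by
            simp only [coe_Ico, Set.mem_Ico] at ha hb
            simpa [Nat.mod_eq_of_lt (by nlinarith : a < N),
              Nat.mod_eq_of_lt (by nlinarith : b < N)] using congrArg Fin.val hab

/-- Cut the coordinates, sorted by decreasing `|x j|`, into consecutive blocks of size `h`. -/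
theorem exists_isBlocking (x : Fin N → ℝ) {h : ℕ} (hh : 0 < h) : ∃ blk, IsBlocking x h blk := by
  set ord := Tuple.sort fun i => -x i ^ 2
  have hanti {i i' : Fin N} (hii' : i ≤ i') : x (ord i') ^ 2 ≤ x (ord i) ^ 2 := by
    simpa using Tuple.monotone_sort (fun i => -x i ^ 2) hii'
  have hdiv {n t : ℕ} : n / h = t ↔ t * h ≤ n ∧ n < t * h + h := by
    rw [Nat.div_eq_iff hh]; omega
  refine ⟨fun j => (ord.symm j : ℕ) / h, fun j => (Nat.div_le_self _ _).trans_lt (ord.symm j).isLt,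
    fun t => ?_, fun j hj => ?_⟩
  · calc #{j | (ord.symm j : ℕ) / h = t} ≤ #(Ico (t * h) (t * h + h)) :=
          card_le_card_of_injOn (fun j => (ord.symm j : ℕ))
            (fun j hj => by simpa using hdiv.1 (mem_filter.1 hj).2)
            fun a _ b _ hab => ord.symm.injective (Fin.val_injective hab)
      _ = h := by simp
  -- the previous block consists of the `h` coordinates of ranks `t h, …, t h + h - 1`
  obtain ⟨t, ht⟩ := Nat.exists_eq_succ_of_ne_zero hj
  have hrank := hdiv.1 ht
  have hN := (ord.symm j).isLt
  set P : Finset (Fin N) := {i | (i : ℕ) / h = t}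
  have hP : h ≤ #P := le_card_filter_div_eq hh (by nlinarith)
  have hprev : prevBlockEnergy x (fun j => (ord.symm j : ℕ) / h) ((ord.symm j : ℕ) / h)
      = ∑ i ∈ P, x (ord i) ^ 2 := by
    rw [prevBlockEnergy, sum_filter, sum_filter, ← Equiv.sum_comp ord, ht]
    simp
  rw [hprev]
  calc (h : ℝ) * x j ^ 2 ≤ #P * x j ^ 2 := by gcongr
    _ = ∑ _i ∈ P, x j ^ 2 := by rw [sum_const, nsmul_eq_mul]
    _ ≤ ∑ i ∈ P, x (ord i) ^ 2 := sum_le_sum fun i hi => by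
        have hi := hdiv.1 (mem_filter.1 hi).2
        have hin : i ≤ ord.symm j := by rw [Fin.le_def]; nlinarith
        simpa using hanti hin

variable {x : Fin N → ℝ} {h : ℕ} {blk : Fin N → ℕ}

lemma prevBlockEnergy_nonneg (t : ℕ) : 0 ≤ prevBlockEnergy x blk t :=
  sum_nonneg fun _ _ => sq_nonneg _

lemma sum_prevBlockEnergy_le : ∑ t ∈ range N, prevBlockEnergy x blk t ≤ sqNorm x := by
  simp only [prevBlockEnergy, sum_fiberwise_eq_sum_filter]
  exact sum_le_sum_of_subset_of_nonneg (filter_subset _ _) fun _ _ _ => sq_nonneg _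

lemma IsBlocking.sum_blockEnergy (hb : IsBlocking x h blk) :
    ∑ t ∈ range N, ∑ j with blk j = t, x j ^ 2 = sqNorm x :=
  sum_fiberwise_of_maps_to (fun j _ => mem_range.2 (hb.lt j)) _

end Blocking

section SignedBlocks

variable {m N : ℕ} (Φ : Matrix (Fin m) (Fin N) ℝ) (x : Fin N → ℝ) (blk : Fin N → ℕ)

def signed (σ : Fin N → Bool) (x : Fin N → ℝ) : Fin N → ℝ := fun j => bsign (σ j) * x j

def partialImage (r : ℕ) (σ : Fin N → Bool) : Fin m → ℝ :=
  Φ *ᵥ fun j => if blk j < r then bsign (σ j) * x j else 0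

def blockImage (t : ℕ) (σ : Fin N → Bool) : Fin m → ℝ :=
  Φ *ᵥ fun j => if blk j = t then bsign (σ j) * x j else 0

variable {Φ x blk}

lemma partialImage_zero (σ : Fin N → Bool) : partialImage Φ x blk 0 σ = 0 := by
  simp only [partialImage, Nat.not_lt_zero, if_false]
  exact mulVec_zero Φ

lemma partialImage_succ (r : ℕ) (σ : Fin N → Bool) :
    partialImage Φ x blk (r + 1) σ = partialImage Φ x blk r σ + blockImage Φ x blk r σ := by
  rw [partialImage, partialImage, blockImage, ← mulVec_add]
  congr 1
  ext j
  rcases lt_trichotomy (blk j) r with hj | hj | hj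
  · simp [hj, hj.trans (Nat.lt_succ_self r), hj.ne]
  · simp [hj]
  · simp [hj.ne', (Nat.succ_le_of_lt hj).not_gt, hj.not_gt]

lemma partialImage_eq_mulVec_signed (hblk : ∀ j, blk j < N) (σ : Fin N → Bool) :
    partialImage Φ x blk N σ = Φ *ᵥ signed σ x := by
  simp [partialImage, hblk]
  rfl

lemma dependsOnlyBelow_partialImage (r : ℕ) :
    DependsOnlyBelow blk r (partialImage Φ x blk r) := fun σ σ' h => by
  simp only [partialImage]
  congr 1
  ext j
  split_ifs with hj
  · rw [h j hj]
  · rfl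

lemma dotProduct_blockImage (v : Fin m → ℝ) (t : ℕ) (σ : Fin N → Bool) :
    v ⬝ᵥ blockImage Φ x blk t σ = ∑ j with blk j = t, bsign (σ j) * x j * (v ᵥ* Φ) j := by
  rw [blockImage, dotProduct_mulVec, dotProduct, sum_filter]
  exact sum_congr rfl fun j _ => by split_ifs <;> ring

/-- The cross terms are linear in the signs of block `t`, with coefficients determined by the
earlier blocks. -/
lemma sqNorm_mulVec_signed (hblk : ∀ j, blk j < N) (σ : Fin N → Bool) :
    sqNorm (Φ *ᵥ signed σ x) = ∑ t ∈ range N,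
      (sqNorm (blockImage Φ x blk t σ)
        + 2 * (partialImage Φ x blk t σ ⬝ᵥ blockImage Φ x blk t σ)) := by
  have h0 : sqNorm (partialImage Φ x blk 0 σ) = 0 := by simp [partialImage_zero, sqNorm]
  rw [← partialImage_eq_mulVec_signed hblk, ← sub_zero (sqNorm _), ← h0,
    ← sum_range_sub fun r => sqNorm (partialImage Φ x blk r σ)]
  refine sum_congr rfl fun t _ => ?_
  rw [partialImage_succ, sqNorm_add]
  ring

lemma sqNorm_signedBlock (t : ℕ) (σ : Fin N → Bool) :
    sqNorm (fun j => if blk j = t then bsign (σ j) * x j else 0) = ∑ j with blk j = t, x j ^ 2 := by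
  rw [sqNorm_ite]
  exact sum_congr rfl fun j _ => by rw [mul_pow, bsign_sq, one_mul]

lemma IsBlocking.blockImage_mem {k h : ℕ} {δ : ℝ} (hΦ : HasRIP Φ k δ) (hb : IsBlocking x h blk)
    (hk : h ≤ k) (t : ℕ) (σ : Fin N → Bool) :
    (1 - δ) * ∑ j with blk j = t, x j ^ 2 ≤ sqNorm (blockImage Φ x blk t σ) ∧
      sqNorm (blockImage Φ x blk t σ) ≤ (1 + δ) * ∑ j with blk j = t, x j ^ 2 := by
  rw [← sqNorm_signedBlock t σ]
  exact hΦ.of_support_subset (support_ite_subset _ _) ((hb.card_le t).trans hk)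

variable (Φ x blk)

/-- `4 / h` times `varProxy N` bounds the quadratic variation of the cross-term martingale;
freezing the partial image at time `min r t` makes `varProxy r` depend only on the blocks `< r`. -/
def varProxy (r : ℕ) (σ : Fin N → Bool) : ℝ :=
  ∑ t ∈ range N, prevBlockEnergy x blk t *
    ∑ j with blk j = t, (partialImage Φ x blk (min r t) σ ᵥ* Φ) j ^ 2

def varProxyGrad (r : ℕ) (σ : Fin N → Bool) : Fin m → ℝ :=
  ∑ t ∈ range N with r < t, prevBlockEnergy x blk t •
    Φ *ᵥ fun j => if blk j = t then (partialImage Φ x blk r σ ᵥ* Φ) j else 0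

variable {Φ x blk}

lemma varProxy_zero (σ : Fin N → Bool) : varProxy Φ x blk 0 σ = 0 := by
  simp [varProxy, partialImage_zero]

lemma varProxyGrad_zero (σ : Fin N → Bool) : varProxyGrad Φ x blk 0 σ = 0 := by
  simp [varProxyGrad, partialImage_zero, ← Pi.zero_def]

lemma dependsOnlyBelow_varProxy (r : ℕ) : DependsOnlyBelow blk r (varProxy Φ x blk r) :=
  fun σ σ' h => sum_congr rfl fun t _ => by
    rw [(dependsOnlyBelow_partialImage _).mono (min_le_left r t) σ σ' h]

lemma dependsOnlyBelow_varProxyGrad (r : ℕ) : DependsOnlyBelow blk r (varProxyGrad Φ x blk r) :=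
  fun σ σ' h => by simp only [varProxyGrad, dependsOnlyBelow_partialImage r σ σ' h]

lemma varProxyGrad_dotProduct (r : ℕ) (σ : Fin N → Bool) (v : Fin m → ℝ) :
    varProxyGrad Φ x blk r σ ⬝ᵥ v = ∑ t ∈ range N with r < t, prevBlockEnergy x blk t *
      ∑ j with blk j = t, (partialImage Φ x blk r σ ᵥ* Φ) j * (v ᵥ* Φ) j := by
  rw [varProxyGrad, sum_dotProduct]
  refine sum_congr rfl fun t _ => ?_
  rw [smul_dotProduct, smul_eq_mul, dotProduct_comm, dotProduct_mulVec, dotProduct, sum_filter]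
  exact congrArg _ (sum_congr rfl fun j _ => by split_ifs <;> ring)

section TwoBlocks

variable {k h : ℕ} {δ : ℝ} (hΦ : HasRIP Φ k δ) (hb : IsBlocking x h blk) (hk : 2 * h ≤ k)
include hΦ hb hk

lemma IsBlocking.sum_sq_vecMul_blockImage_le {r t : ℕ} (hrt : r ≠ t) (σ : Fin N → Bool) :
    ∑ j with blk j = t, (blockImage Φ x blk r σ ᵥ* Φ) j ^ 2
      ≤ δ ^ 2 * ∑ j with blk j = r, x j ^ 2 := by
  rw [← sqNorm_signedBlock r σ]
  refine hΦ.sum_sq_vecMul_le (support_ite_subset _ _) (disjoint_filter.2 fun j _ h1 h2 =>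
    hrt (h1.symm.trans h2)) ?_
  linarith [hb.card_le r, hb.card_le t]

lemma IsBlocking.varProxy_succ_le (r : ℕ) (σ : Fin N → Bool) :
    varProxy Φ x blk (r + 1) σ ≤ varProxy Φ x blk r σ
      + 2 * (varProxyGrad Φ x blk r σ ⬝ᵥ blockImage Φ x blk r σ)
      + δ ^ 2 * (∑ j with blk j = r, x j ^ 2) * sqNorm x := by
  set a := partialImage Φ x blk r σ ᵥ* Φ
  set d := blockImage Φ x blk r σ ᵥ* Φ
  set W := prevBlockEnergy x blk
  have hstep : varProxy Φ x blk (r + 1) σ = varProxy Φ x blk r σ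
      + ∑ t ∈ range N with r < t, W t * ∑ j with blk j = t, (2 * (a j * d j) + d j ^ 2) := by
    rw [varProxy, varProxy, sum_filter, ← sum_add_distrib]
    refine sum_congr rfl fun t _ => ?_
    by_cases hrt : r < t
    · rw [min_eq_left hrt.le, min_eq_left hrt, if_pos hrt, partialImage_succ, add_vecMul,
        ← mul_add, ← sum_add_distrib]
      exact congrArg _ (sum_congr rfl fun j _ => by simp only [Pi.add_apply, a, d]; ring)
    · rw [min_eq_right (not_lt.1 hrt), min_eq_right (by omega), if_neg hrt, add_zero]
  have hdrift : ∑ t ∈ range N with r < t, W t * ∑ j with blk j = t, d j ^ 2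
      ≤ δ ^ 2 * (∑ j with blk j = r, x j ^ 2) * sqNorm x := calc
    ∑ t ∈ range N with r < t, W t * ∑ j with blk j = t, d j ^ 2
      ≤ ∑ t ∈ range N with r < t, W t * (δ ^ 2 * ∑ j with blk j = r, x j ^ 2) :=
        sum_le_sum fun t ht => mul_le_mul_of_nonneg_left
          (hb.sum_sq_vecMul_blockImage_le hΦ hk (mem_filter.1 ht).2.ne σ) (prevBlockEnergy_nonneg t)
    _ = (∑ t ∈ range N with r < t, W t) * (δ ^ 2 * ∑ j with blk j = r, x j ^ 2) := by
        rw [sum_mul]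
    _ ≤ sqNorm x * (δ ^ 2 * ∑ j with blk j = r, x j ^ 2) :=
        mul_le_mul_of_nonneg_right ((sum_le_sum_of_subset_of_nonneg (filter_subset _ _)
          fun t _ _ => prevBlockEnergy_nonneg t).trans sum_prevBlockEnergy_le) (by positivity)
    _ = _ := by ring
  have hsplit : ∑ t ∈ range N with r < t, W t * ∑ j with blk j = t, (2 * (a j * d j) + d j ^ 2)
      = 2 * ∑ t ∈ range N with r < t, W t * ∑ j with blk j = t, a j * d j
        + ∑ t ∈ range N with r < t, W t * ∑ j with blk j = t, d j ^ 2 := by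
    rw [mul_sum, ← sum_add_distrib]
    exact sum_congr rfl fun t _ => by rw [sum_add_distrib, ← mul_sum]; ring
  rw [hstep, varProxyGrad_dotProduct, hsplit]
  linarith

lemma IsBlocking.sum_sq_vecMul_varProxyGrad_le (r : ℕ) (σ : Fin N → Bool) :
    ∑ j with blk j = r, (varProxyGrad Φ x blk r σ ᵥ* Φ) j ^ 2
      ≤ δ ^ 2 * sqNorm x * varProxy Φ x blk r σ := by
  set a := partialImage Φ x blk r σ ᵥ* Φ
  set W := prevBlockEnergy x blk
  set T := (range N).filter (r < ·)
  set q : ℕ → Fin N → ℝ := fun t => (Φ *ᵥ fun j => if blk j = t then a j else 0) ᵥ* Φ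
  have hZ (j : Fin N) : (varProxyGrad Φ x blk r σ ᵥ* Φ) j = ∑ t ∈ T, W t * q t j := by
    simp [varProxyGrad, sum_vecMul, smul_vecMul, T, W, q, a]
  have hq (t : ℕ) (ht : t ∈ T) :
      ∑ j with blk j = r, q t j ^ 2 ≤ δ ^ 2 * ∑ j with blk j = t, a j ^ 2 := by
    rw [← sqNorm_ite (blk · = t) a]
    refine hΦ.sum_sq_vecMul_le (support_ite_subset _ _) (disjoint_filter.2
      fun j _ (h1 : blk j = t) (h2 : blk j = r) => (mem_filter.1 ht).2.ne (h2.symm.trans h1)) ?_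
    linarith [hb.card_le r, hb.card_le t]
  have hT : ∑ t ∈ T, W t * ∑ j with blk j = t, a j ^ 2 ≤ varProxy Φ x blk r σ := by
    rw [varProxy, sum_filter]
    refine sum_le_sum fun t _ => ?_
    split_ifs with hrt
    · rw [min_eq_left hrt.le]
    · exact mul_nonneg (prevBlockEnergy_nonneg t) (sum_nonneg fun _ _ => sq_nonneg _)
  calc ∑ j with blk j = r, (varProxyGrad Φ x blk r σ ᵥ* Φ) j ^ 2
      = ∑ j with blk j = r, (∑ t ∈ T, W t * q t j) ^ 2 := by simp only [hZ]
    _ ≤ (∑ t ∈ T, W t) * ∑ t ∈ T, W t * ∑ j with blk j = r, q t j ^ 2 :=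
        sum_sq_sum_mul_le T (fun t _ => prevBlockEnergy_nonneg t) q _
    _ ≤ sqNorm x * ∑ t ∈ T, W t * (δ ^ 2 * ∑ j with blk j = t, a j ^ 2) :=
        mul_le_mul ((sum_le_sum_of_subset_of_nonneg (filter_subset _ _)
            fun t _ _ => prevBlockEnergy_nonneg t).trans sum_prevBlockEnergy_le)
          (sum_le_sum fun t ht => mul_le_mul_of_nonneg_left (hq t ht) (prevBlockEnergy_nonneg t))
          (sum_nonneg fun t _ => mul_nonneg (prevBlockEnergy_nonneg t)
            (sum_nonneg fun _ _ => sq_nonneg _)) (sqNorm_nonneg x)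
    _ = δ ^ 2 * sqNorm x * ∑ t ∈ T, W t * ∑ j with blk j = t, a j ^ 2 := by
        rw [mul_sum, mul_sum]
        exact sum_congr rfl fun t _ => by ring
    _ ≤ δ ^ 2 * sqNorm x * varProxy Φ x blk r σ :=
        mul_le_mul_of_nonneg_left hT (mul_nonneg (sq_nonneg δ) (sqNorm_nonneg x))

end TwoBlocks

end SignedBlocks

section Stopping

variable {m N : ℕ} (Φ : Matrix (Fin m) (Fin N) ℝ) (x : Fin N → ℝ) (blk : Fin N → ℕ) (δ : ℝ)

open Classical in
/-- The first time at which the variance proxy exceeds `3 δ²`, or `N + 1` if there is none. -/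
def stopTime (σ : Fin N → Bool) : ℕ :=
  Nat.find (⟨N + 1, .inl N.lt_succ_self⟩ : ∃ r, N < r ∨ 3 * δ ^ 2 < varProxy Φ x blk r σ)

/-- The coefficients of the martingale `∑ₜ 2 ⟪v t, blockImage t⟫`, stopped at `stopTime`. -/
def stoppedCoeff (v : ℕ → (Fin N → Bool) → Fin m → ℝ) (j : Fin N) (σ : Fin N → Bool) : ℝ :=
  if blk j < stopTime Φ x blk δ σ then 2 * x j * (v (blk j) σ ᵥ* Φ) j else 0

variable {Φ x blk δ}

lemma lt_stopTime_iff {t : ℕ} {σ : Fin N → Bool} :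
    t < stopTime Φ x blk δ σ ↔ ∀ r ≤ t, r ≤ N ∧ varProxy Φ x blk r σ ≤ 3 * δ ^ 2 := by
  simp only [stopTime, Nat.lt_find_iff, not_or, not_lt]

lemma stopTime_pos (σ : Fin N → Bool) : 0 < stopTime Φ x blk δ σ :=
  lt_stopTime_iff.2 fun r hr => by
    obtain rfl : r = 0 := Nat.le_zero.1 hr
    exact ⟨Nat.zero_le N, by rw [varProxy_zero]; positivity⟩

lemma varProxy_le_of_lt_stopTime {r : ℕ} {σ : Fin N → Bool} (h : r < stopTime Φ x blk δ σ) :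
    varProxy Φ x blk r σ ≤ 3 * δ ^ 2 :=
  (lt_stopTime_iff.1 h r le_rfl).2

lemma lt_varProxy_stopTime {σ : Fin N → Bool} (h : stopTime Φ x blk δ σ ≤ N) :
    3 * δ ^ 2 < varProxy Φ x blk (stopTime Φ x blk δ σ) σ := by
  unfold stopTime at h ⊢
  exact Or.resolve_left (Nat.find_spec (p := fun r => N < r ∨ 3 * δ ^ 2 < varProxy Φ x blk r σ) _)
    (not_lt.2 h)

lemma dependsOnlyBelow_lt_stopTime (t : ℕ) :
    DependsOnlyBelow blk t fun σ => t < stopTime Φ x blk δ σ := fun σ σ' h => by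
  simp only [eq_iff_iff, lt_stopTime_iff]
  exact forall₂_congr fun r hr => by rw [(dependsOnlyBelow_varProxy r).mono hr σ σ' h]

lemma isPredictable_stoppedCoeff {v : ℕ → (Fin N → Bool) → Fin m → ℝ}
    (hv : ∀ r, DependsOnlyBelow blk r (v r)) : IsPredictable blk (stoppedCoeff Φ x blk δ v) :=
  fun j σ σ' h => by
    have hstop := dependsOnlyBelow_lt_stopTime (x := x) (Φ := Φ) (δ := δ) (blk j) σ σ' h
    simp only [eq_iff_iff] at hstop
    simp only [stoppedCoeff, hstop, hv _ σ σ' h]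

lemma sum_bsign_mul_stoppedCoeff (hblk : ∀ j, blk j < N) (v : ℕ → (Fin N → Bool) → Fin m → ℝ)
    (σ : Fin N → Bool) :
    ∑ j, bsign (σ j) * stoppedCoeff Φ x blk δ v j σ
      = ∑ t ∈ range N with t < stopTime Φ x blk δ σ, 2 * (v t σ ⬝ᵥ blockImage Φ x blk t σ) := by
  rw [← sum_fiberwise_of_maps_to (g := blk) (t := range N) fun j _ => mem_range.2 (hblk j),
    sum_filter]
  refine sum_congr rfl fun t _ => ?_
  split_ifs with ht
  · rw [dotProduct_blockImage, mul_sum]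
    refine sum_congr rfl fun j hj => ?_
    simp only [stoppedCoeff, (mem_filter.1 hj).2, ht, if_true]
    ring
  · exact sum_eq_zero fun j hj => by simp [stoppedCoeff, (mem_filter.1 hj).2, ht]

lemma IsBlocking.mul_sum_sq_stoppedCoeff_le {h : ℕ} (hb : IsBlocking x h blk)
    {v : ℕ → (Fin N → Bool) → Fin m → ℝ} {σ : Fin N → Bool} (hv0 : v 0 σ = 0) :
    h * ∑ j, stoppedCoeff Φ x blk δ v j σ ^ 2 ≤ 4 * ∑ t ∈ range N with t < stopTime Φ x blk δ σ,
      prevBlockEnergy x blk t * ∑ j with blk j = t, (v t σ ᵥ* Φ) j ^ 2 := by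
  rw [← sum_fiberwise_of_maps_to (g := blk) (t := range N) fun j _ => mem_range.2 (hb.lt j),
    sum_filter, mul_sum, mul_sum]
  refine sum_le_sum fun t _ => ?_
  split_ifs with ht
  · rw [mul_sum, mul_sum, mul_sum]
    refine sum_le_sum fun j hj => ?_
    have hjt : blk j = t := (mem_filter.1 hj).2
    simp only [stoppedCoeff, hjt, ht, if_true]
    rcases eq_or_ne t 0 with rfl | ht0
    · simp [hv0]
    · have := hb.mul_sq_le j (hjt ▸ ht0)
      rw [hjt] at this
      nlinarith [sq_nonneg ((v t σ ᵥ* Φ) j)]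
  · rw [sum_eq_zero fun j hj => by simp [stoppedCoeff, (mem_filter.1 hj).2, ht], mul_zero, mul_zero]

end Stopping

section Bounds

variable {m N k h : ℕ} {Φ : Matrix (Fin m) (Fin N) ℝ} {x : Fin N → ℝ} {blk : Fin N → ℕ} {δ : ℝ}

lemma IsBlocking.mul_sum_sq_stoppedCoeff_partialImage_le (hb : IsBlocking x h blk)
    (σ : Fin N → Bool) :
    h * ∑ j, stoppedCoeff Φ x blk δ (partialImage Φ x blk) j σ ^ 2 ≤ 12 * δ ^ 2 := by
  set R := stopTime Φ x blk δ σ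
  have hfrozen : ∑ t ∈ range N with t < R, prevBlockEnergy x blk t *
      ∑ j with blk j = t, (partialImage Φ x blk t σ ᵥ* Φ) j ^ 2 ≤ varProxy Φ x blk (R - 1) σ := by
    rw [varProxy, sum_filter]
    refine sum_le_sum fun t _ => ?_
    split_ifs with ht
    · rw [min_eq_right (Nat.le_sub_one_of_lt ht)]
    · exact mul_nonneg (prevBlockEnergy_nonneg t) (sum_nonneg fun _ _ => sq_nonneg _)
  have hR : varProxy Φ x blk (R - 1) σ ≤ 3 * δ ^ 2 :=
    varProxy_le_of_lt_stopTime (Nat.sub_one_lt (stopTime_pos σ).ne')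
  refine (hb.mul_sum_sq_stoppedCoeff_le (partialImage_zero σ)).trans ?_
  linarith

lemma IsBlocking.abs_sum_sqNorm_blockImage_sub_le (hΦ : HasRIP Φ k δ) (hb : IsBlocking x h blk)
    (hk : h ≤ k) (σ : Fin N → Bool) :
    |∑ t ∈ range N, sqNorm (blockImage Φ x blk t σ) - sqNorm x| ≤ δ * sqNorm x := by
  have hlo : (1 - δ) * sqNorm x ≤ ∑ t ∈ range N, sqNorm (blockImage Φ x blk t σ) := by
    rw [← hb.sum_blockEnergy, mul_sum]
    exact sum_le_sum fun t _ => (hb.blockImage_mem hΦ hk t σ).1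
  have hhi : ∑ t ∈ range N, sqNorm (blockImage Φ x blk t σ) ≤ (1 + δ) * sqNorm x := by
    rw [← hb.sum_blockEnergy, mul_sum]
    exact sum_le_sum fun t _ => (hb.blockImage_mem hΦ hk t σ).2
  rw [abs_le]
  constructor <;> linarith

variable (hΦ : HasRIP Φ k δ) (hb : IsBlocking x h blk) (hk : 2 * h ≤ k) (hx : sqNorm x = 1)
include hΦ hb hk hx

lemma IsBlocking.mul_sum_sq_stoppedCoeff_varProxyGrad_le (σ : Fin N → Bool) :
    h * ∑ j, stoppedCoeff Φ x blk δ (varProxyGrad Φ x blk) j σ ^ 2 ≤ 12 * δ ^ 4 := by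
  set R := stopTime Φ x blk δ σ
  set W := prevBlockEnergy x blk
  have hterm : ∀ t ∈ (range N).filter (· < R),
      W t * ∑ j with blk j = t, (varProxyGrad Φ x blk t σ ᵥ* Φ) j ^ 2 ≤ W t * (3 * δ ^ 4) :=
    fun t ht => mul_le_mul_of_nonneg_left (by
      have h1 := hb.sum_sq_vecMul_varProxyGrad_le hΦ hk t σ
      have h2 := varProxy_le_of_lt_stopTime (mem_filter.1 ht).2
      rw [hx, mul_one] at h1
      nlinarith [sq_nonneg δ]) (prevBlockEnergy_nonneg t)
  have hW : ∑ t ∈ range N with t < R, W t ≤ 1 :=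
    hx ▸ (sum_le_sum_of_subset_of_nonneg (filter_subset _ _)
      fun t _ _ => prevBlockEnergy_nonneg t).trans sum_prevBlockEnergy_le
  refine (hb.mul_sum_sq_stoppedCoeff_le (varProxyGrad_zero σ)).trans ?_
  calc 4 * ∑ t ∈ range N with t < R, W t * ∑ j with blk j = t, (varProxyGrad Φ x blk t σ ᵥ* Φ) j ^ 2
      ≤ 4 * ((∑ t ∈ range N with t < R, W t) * (3 * δ ^ 4)) := by
        rw [sum_mul]; exact mul_le_mul_of_nonneg_left (sum_le_sum hterm) (by norm_num)
    _ ≤ 12 * δ ^ 4 := by nlinarith [pow_two_nonneg (δ ^ 2)]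

/-- If the variance proxy leaves `[0, 3 δ²]`, the martingale driving it has grown by `2 δ²`. -/
lemma IsBlocking.two_mul_sq_le_sum_bsign_mul_stoppedCoeff {σ : Fin N → Bool}
    (hstop : stopTime Φ x blk δ σ ≤ N) :
    2 * δ ^ 2 ≤ ∑ j, bsign (σ j) * stoppedCoeff Φ x blk δ (varProxyGrad Φ x blk) j σ := by
  set R := stopTime Φ x blk δ σ
  have hrange : (range N).filter (· < R) = range R := by
    ext t; simp only [mem_filter, mem_range]; omega
  have hS : ∑ r ∈ range R, ∑ j with blk j = r, x j ^ 2 ≤ 1 := hx ▸ hb.sum_blockEnergy ▸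
    sum_le_sum_of_subset_of_nonneg (range_subset_range.2 hstop) fun _ _ _ =>
      sum_nonneg fun _ _ => sq_nonneg _
  have hgrowth : varProxy Φ x blk R σ ≤ ∑ r ∈ range R,
      2 * (varProxyGrad Φ x blk r σ ⬝ᵥ blockImage Φ x blk r σ) + δ ^ 2 := calc
    varProxy Φ x blk R σ = ∑ r ∈ range R, (varProxy Φ x blk (r + 1) σ - varProxy Φ x blk r σ) := by
        rw [sum_range_sub (fun r => varProxy Φ x blk r σ), varProxy_zero, sub_zero]
    _ ≤ ∑ r ∈ range R, (2 * (varProxyGrad Φ x blk r σ ⬝ᵥ blockImage Φ x blk r σ)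
          + δ ^ 2 * ∑ j with blk j = r, x j ^ 2) := sum_le_sum fun r _ => by
        have := hb.varProxy_succ_le hΦ hk r σ
        rw [hx, mul_one] at this
        linarith
    _ ≤ _ := by
        rw [sum_add_distrib, ← mul_sum _ _ (δ ^ 2)]
        nlinarith [sq_nonneg δ]
  rw [sum_bsign_mul_stoppedCoeff hb.lt, hrange]
  linarith [lt_varProxy_stopTime hstop]

end Bounds

section Counting

variable {m N k h : ℕ} {Φ : Matrix (Fin m) (Fin N) ℝ} {δ : ℝ}

lemma IsBlocking.abs_sqNorm_mulVec_signed_sub_le {x : Fin N → ℝ} {blk : Fin N → ℕ}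
    (hΦ : HasRIP Φ k δ) (hb : IsBlocking x h blk) (hk : h ≤ k) {σ : Fin N → Bool}
    (hstop : N < stopTime Φ x blk δ σ) :
    |sqNorm (Φ *ᵥ signed σ x) - sqNorm x|
      ≤ δ * sqNorm x + |∑ j, bsign (σ j) * stoppedCoeff Φ x blk δ (partialImage Φ x blk) j σ| := by
  rw [sqNorm_mulVec_signed hb.lt, sum_add_distrib, sum_bsign_mul_stoppedCoeff hb.lt,
    filter_true_of_mem fun t ht => (mem_range.1 ht).trans hstop, add_sub_right_comm]
  exact (abs_add_le _ _).trans (by linarith [hb.abs_sum_sqNorm_blockImage_sub_le hΦ hk σ])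

/-- A bad sign pattern either stops the process, or makes the stopped cross-term sum large. -/
lemma IsBlocking.three_mul_le_abs_or_two_mul_sq_le {x : Fin N → ℝ} {blk : Fin N → ℕ}
    (hΦ : HasRIP Φ k δ) (hb : IsBlocking x h blk) (hk : 2 * h ≤ k) (hx : sqNorm x = 1)
    {σ : Fin N → Bool} (hbad : 4 * δ < |sqNorm (Φ *ᵥ signed σ x) - 1|) :
    3 * δ ≤ |∑ j, bsign (σ j) * stoppedCoeff Φ x blk δ (partialImage Φ x blk) j σ| ∨
      2 * δ ^ 2 ≤ ∑ j, bsign (σ j) * stoppedCoeff Φ x blk δ (varProxyGrad Φ x blk) j σ := by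
  by_cases hstop : stopTime Φ x blk δ σ ≤ N
  · exact .inr (hb.two_mul_sq_le_sum_bsign_mul_stoppedCoeff hΦ hk hx hstop)
  · have := hb.abs_sqNorm_mulVec_signed_sub_le hΦ (by omega) (not_le.1 hstop)
    rw [hx, mul_one] at this
    exact .inl (by linarith)

theorem card_not_abs_sqNorm_sub_one_le (hΦ : HasRIP Φ k δ) (hδ : 0 < δ) (hh : 0 < h)
    (hk : 2 * h ≤ k) {x : Fin N → ℝ} (hx : sqNorm x = 1) :
    (#{σ | ¬|sqNorm (Φ *ᵥ signed σ x) - 1| ≤ 4 * δ} : ℝ) ≤ 3 * 2 ^ N * exp (-(h / 6)) := by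
  obtain ⟨blk, hb⟩ := exists_isBlocking x hh
  have hh' : (0 : ℝ) < h := Nat.cast_pos.2 hh
  set γ₁ := stoppedCoeff Φ x blk δ (partialImage Φ x blk)
  set γ₂ := stoppedCoeff Φ x blk δ (varProxyGrad Φ x blk)
  have hA₁ : (#{σ | 3 * δ ≤ |∑ j, bsign (σ j) * γ₁ j σ|} : ℝ) ≤ 2 * (2 ^ N * exp (-(h / 6))) := by
    refine ((isPredictable_stoppedCoeff dependsOnlyBelow_partialImage).card_le_abs_sum_le
      (V := 12 * δ ^ 2 / h) (by positivity) (by positivity) fun σ => ?_).trans ?_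
    · rw [le_div_iff₀ hh', mul_comm]; exact hb.mul_sum_sq_stoppedCoeff_partialImage_le σ
    · rw [Fintype.card_fin, show (3 * δ) ^ 2 / (2 * (12 * δ ^ 2 / h)) = 3 * h / 8 by
        field_simp; ring]
      exact mul_le_mul_of_nonneg_left (mul_le_mul_of_nonneg_left (exp_le_exp.2 (by linarith))
        (by positivity)) (by norm_num)
  have hA₂ : (#{σ | 2 * δ ^ 2 ≤ ∑ j, bsign (σ j) * γ₂ j σ} : ℝ) ≤ 2 ^ N * exp (-(h / 6)) := by
    refine ((isPredictable_stoppedCoeff dependsOnlyBelow_varProxyGrad).card_le_sum_le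
      (V := 12 * δ ^ 4 / h) (by positivity) (by positivity) fun σ => ?_).trans_eq ?_
    · rw [le_div_iff₀ hh', mul_comm]; exact hb.mul_sum_sq_stoppedCoeff_varProxyGrad_le hΦ hk hx σ
    · rw [Fintype.card_fin]
      congr 2
      field_simp
      ring
  have hsub : ({σ | ¬|sqNorm (Φ *ᵥ signed σ x) - 1| ≤ 4 * δ} : Finset (Fin N → Bool)) ⊆
      ({σ | 3 * δ ≤ |∑ j, bsign (σ j) * γ₁ j σ|} : Finset (Fin N → Bool)) ∪
        ({σ | 2 * δ ^ 2 ≤ ∑ j, bsign (σ j) * γ₂ j σ} : Finset (Fin N → Bool)) :=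
    fun σ hσ => by
      simp only [mem_union, mem_filter, mem_univ, true_and, not_le] at hσ ⊢
      exact hb.three_mul_le_abs_or_two_mul_sq_le hΦ hk hx hσ
  calc (#{σ | ¬|sqNorm (Φ *ᵥ signed σ x) - 1| ≤ 4 * δ} : ℝ)
      ≤ #{σ | 3 * δ ≤ |∑ j, bsign (σ j) * γ₁ j σ|}
        + #{σ | 2 * δ ^ 2 ≤ ∑ j, bsign (σ j) * γ₂ j σ} := by
        exact_mod_cast (card_le_card hsub).trans (card_union_le _ _)
    _ ≤ 3 * 2 ^ N * exp (-(h / 6)) := by linarith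

lemma signed_smul (σ : Fin N → Bool) (c : ℝ) (x : Fin N → ℝ) :
    signed σ (c • x) = c • signed σ x := by
  ext j; simp only [signed, Pi.smul_apply, smul_eq_mul]; ring

theorem card_not_abs_sqNorm_sub_le (hΦ : HasRIP Φ k δ) (hδ : 0 < δ) (hk : 2 * h ≤ k)
    (x : Fin N → ℝ) :
    (#{σ | ¬|sqNorm (Φ *ᵥ signed σ x) - sqNorm x| ≤ 4 * δ * sqNorm x} : ℝ)
      ≤ 3 * 2 ^ N * exp (-(h / 6)) := by
  rcases Nat.eq_zero_or_pos h with rfl | hh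
  · calc (#{σ | ¬|sqNorm (Φ *ᵥ signed σ x) - sqNorm x| ≤ 4 * δ * sqNorm x} : ℝ)
        ≤ #(univ : Finset (Fin N → Bool)) := by exact_mod_cast card_le_univ _
      _ ≤ 3 * 2 ^ N * exp (-((0 : ℕ) / 6 : ℝ)) := by simp
  rcases (sqNorm_nonneg x).eq_or_lt with hx0 | hx0
  · obtain rfl : x = 0 := dotProduct_self_eq_zero.1 (sqNorm_eq_dotProduct x ▸ hx0.symm)
    have hzero (σ : Fin N → Bool) : signed σ (0 : Fin N → ℝ) = 0 := by ext; simp [signed]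
    simp [hzero, sqNorm]
    positivity
  set c := (√(sqNorm x))⁻¹
  have hc : c ^ 2 = (sqNorm x)⁻¹ := by rw [inv_pow, sq_sqrt hx0.le]
  have hunit : sqNorm (c • x) = 1 := by rw [sqNorm_smul, hc, inv_mul_cancel₀ hx0.ne']
  refine le_of_eq_of_le ?_ (card_not_abs_sqNorm_sub_one_le hΦ hδ hh hk hunit)
  congr 3
  ext σ
  simp only [signed_smul, mulVec_smul, sqNorm_smul, hc]
  rw [← inv_mul_cancel₀ hx0.ne', ← mul_sub, abs_mul, abs_inv, abs_of_pos hx0, inv_mul_le_iff₀ hx0,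
    mul_comm (sqNorm x)]

theorem card_not_forall_abs_sqNorm_sub_le (hΦ : HasRIP Φ k δ) (hδ : 0 < δ) (hk : 2 * h ≤ k)
    (E : Finset (Fin N → ℝ)) :
    (#{σ | ¬∀ x ∈ E, |sqNorm (Φ *ᵥ signed σ x) - sqNorm x| ≤ 4 * δ * sqNorm x} : ℝ)
      ≤ #E * (3 * 2 ^ N * exp (-(h / 6))) := by
  classical
  have hsub : ({σ | ¬∀ x ∈ E, |sqNorm (Φ *ᵥ signed σ x) - sqNorm x| ≤ 4 * δ * sqNorm x} :
      Finset (Fin N → Bool)) ⊆ E.biUnion fun x =>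
        {σ | ¬|sqNorm (Φ *ᵥ signed σ x) - sqNorm x| ≤ 4 * δ * sqNorm x} := fun σ hσ => by
    simp only [mem_filter, mem_univ, true_and, not_forall, mem_biUnion] at hσ ⊢
    obtain ⟨x, hx, hbad⟩ := hσ
    exact ⟨x, hx, hbad⟩
  calc (#{σ | ¬∀ x ∈ E, |sqNorm (Φ *ᵥ signed σ x) - sqNorm x| ≤ 4 * δ * sqNorm x} : ℝ)
      ≤ ∑ x ∈ E, (#{σ | ¬|sqNorm (Φ *ᵥ signed σ x) - sqNorm x| ≤ 4 * δ * sqNorm x} : ℝ) := by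
        exact_mod_cast (card_le_card hsub).trans card_biUnion_le
    _ ≤ #E * (3 * 2 ^ N * exp (-(h / 6))) := by
        rw [← nsmul_eq_mul, ← sum_const]
        exact sum_le_sum fun x _ => card_not_abs_sqNorm_sub_le hΦ hδ hk x

end Counting

section Rademacher

variable {Ω : Type*} [MeasurableSpace Ω] {μ : Measure Ω} {N : ℕ} {ξ : Ω → Fin N → ℝ}

lemma IsRademacher.measure_eq_bsign (hξ : IsRademacher μ ξ) (σ : Fin N → Bool) :
    μ {ω | ξ ω = fun j => bsign (σ j)} = 2⁻¹ ^ N := by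
  have hinter : {ω | ξ ω = fun j => bsign (σ j)}
      = ⋂ i ∈ (univ : Finset (Fin N)), (fun ω => ξ ω i) ⁻¹' {bsign (σ i)} := by
    ext ω; simp [funext_iff]
  have hcoord (i : Fin N) : μ ((fun ω => ξ ω i) ⁻¹' {bsign (σ i)}) = 2⁻¹ := by
    have h : (μ ((fun ω => ξ ω i) ⁻¹' {bsign (σ i)})).toReal = 1 / 2 := by
      cases σ i
      · exact (hξ.2.2 i).2
      · exact (hξ.2.2 i).1
    rw [← ENNReal.ofReal_toReal (a := μ _) (ENNReal.toReal_pos_iff.1 (by rw [h]; norm_num)).2.ne, h,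
      one_div, ENNReal.ofReal_inv_of_pos two_pos, ENNReal.ofReal_ofNat]
  rw [hinter, hξ.2.1.measure_inter_preimage_eq_mul _ fun i _ => measurableSet_singleton _]
  simp [hcoord]

lemma IsRademacher.one_sub_le_toReal_measure [IsProbabilityMeasure μ] (hξ : IsRademacher μ ξ)
    (P : (Fin N → ℝ) → Prop) [DecidablePred P] {η : ℝ}
    (hbad : (#{σ : Fin N → Bool | ¬P fun j => bsign (σ j)} : ℝ) ≤ η * 2 ^ N) :
    1 - η ≤ (μ {ω | P (ξ ω)}).toReal := by
  set G : Finset (Fin N → Bool) := {σ | P fun j => bsign (σ j)}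
  have hG : (1 - η) * 2 ^ N ≤ #G := by
    have := card_filter_add_card_filter_not (s := univ)
      (fun σ : Fin N → Bool => P fun j => bsign (σ j))
    simp only [card_univ, Fintype.card_fun, Fintype.card_bool, Fintype.card_fin] at this
    have : (#G : ℝ) + #{σ : Fin N → Bool | ¬P fun j => bsign (σ j)} = 2 ^ N := by
      exact_mod_cast this
    linarith
  have hdisj : (G : Set (Fin N → Bool)).PairwiseDisjoint
      fun σ => {ω | ξ ω = fun j => bsign (σ j)} :=
    fun σ _ σ' _ hne => Set.disjoint_left.2 fun ω h h' => hne <| funext fun j =>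
      bsign_injective (congrFun (h.symm.trans h') j)
  have hunion : μ.real (⋃ σ ∈ G, {ω | ξ ω = fun j => bsign (σ j)}) = #G * 2⁻¹ ^ N := by
    rw [measureReal_biUnion_finset hdisj fun σ _ => hξ.1 (measurableSet_singleton _)]
    simp [measureReal_def, hξ.measure_eq_bsign]
  have hsub : (⋃ σ ∈ G, {ω | ξ ω = fun j => bsign (σ j)}) ⊆ {ω | P (ξ ω)} :=
    Set.iUnion₂_subset fun σ hσ ω hω => by
      show P (ξ ω)
      rw [show ξ ω = _ from hω]
      exact (mem_filter.1 hσ).2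
  calc 1 - η = (1 - η) * 2 ^ N * 2⁻¹ ^ N := by rw [mul_assoc, ← mul_pow]; norm_num
    _ ≤ #G * 2⁻¹ ^ N := by gcongr
    _ = μ.real (⋃ σ ∈ G, {ω | ξ ω = fun j => bsign (σ j)}) := hunion.symm
    _ ≤ (μ {ω | P (ξ ω)}).toReal := measureReal_mono hsub

end Rademacher

lemma mul_three_mul_exp_neg_le {p k : ℕ} {η : ℝ} (hη : η ∈ Set.Ioo (0 : ℝ) 1)
    (hk : (k : ℝ) ≥ 40 * log (4 * p / η)) :
    p * (3 * exp (-(((k / 2 : ℕ) : ℝ) / 6))) ≤ η := by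
  obtain ⟨hη0, hη1⟩ := hη
  rcases Nat.eq_zero_or_pos p with rfl | hp
  · simpa using hη0.le
  have hp' : (1 : ℝ) ≤ p := Nat.one_le_cast.2 hp
  have hratio : 0 < 4 * p / η := by positivity
  have hlog : 3 / 4 ≤ log (4 * p / η) := by
    have hinv : (4 * p / η)⁻¹ ≤ 1 / 4 := by
      rw [inv_div, div_le_div_iff₀ (by positivity) (by norm_num)]; nlinarith
    linarith [one_sub_inv_le_log_of_pos hratio]
  have hhalf : (k : ℝ) ≤ 2 * ((k / 2 : ℕ) : ℝ) + 1 := by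
    exact_mod_cast (by omega : k ≤ 2 * (k / 2) + 1)
  have hexp : 4 * p / η ≤ exp (k / 40) := by
    rw [← exp_log hratio, exp_le_exp]; linarith
  calc p * (3 * exp (-(((k / 2 : ℕ) : ℝ) / 6))) ≤ p * (3 * exp (-(k / 40))) :=
        mul_le_mul_of_nonneg_left (mul_le_mul_of_nonneg_left (exp_le_exp.2 (by linarith))
          (by norm_num)) (by positivity)
    _ = 3 * p / exp (k / 40) := by rw [Real.exp_neg]; ring
    _ ≤ 3 * p / (4 * p / η) := by gcongr
    _ = 3 / 4 * η := by field_simp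
    _ ≤ η := by linarith

lemma mulVec_mul_diagonal_bsign {m N : ℕ} (Φ : Matrix (Fin m) (Fin N) ℝ) (σ : Fin N → Bool)
    (x : Fin N → ℝ) : (Φ * diagonal fun j => bsign (σ j)) *ᵥ x = Φ *ᵥ signed σ x := by
  rw [← mulVec_mulVec]
  congr 1
  ext j
  simp [mulVec_diagonal, signed]

/-- Theorem 3.1 of Krahmer–Ward: randomizing the column signs of a matrix with
the restricted isometry property yields a Johnson-Lindenstrauss embedding on any fixed set. -/
theorem rip_to_jl {Ω : Type*} [MeasurableSpace Ω] (μ : Measure Ω) [IsProbabilityMeasure μ]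
    {m N p k : ℕ} {ε η δ : ℝ}
    (hε : ε ∈ Set.Ioo (0 : ℝ) 1) (hη : η ∈ Set.Ioo (0 : ℝ) 1)
    (E : Finset (Fin N → ℝ)) (hE : E.card = p)
    (Φ : Matrix (Fin m) (Fin N) ℝ)
    (hk : (k : ℝ) ≥ 40 * Real.log (4 * p / η)) (hδ : δ ≤ ε / 4)
    (hRIP : HasRIP Φ k δ)
    (ξ : Ω → Fin N → ℝ) (hξ : IsRademacher μ ξ) :
    1 - η ≤ (μ {ω | ∀ x ∈ E,
      (1 - ε) * sqNorm x ≤ sqNorm ((Φ * Matrix.diagonal (ξ ω)).mulVec x) ∧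
      sqNorm ((Φ * Matrix.diagonal (ξ ω)).mulVec x) ≤ (1 + ε) * sqNorm x}).toReal := by
  classical
  refine hξ.one_sub_le_toReal_measure (fun v => ∀ x ∈ E,
    (1 - ε) * sqNorm x ≤ sqNorm ((Φ * diagonal v) *ᵥ x) ∧
      sqNorm ((Φ * diagonal v) *ᵥ x) ≤ (1 + ε) * sqNorm x) ?_
  have hbad := card_not_forall_abs_sqNorm_sub_le (hRIP.mono hδ) (by linarith [hε.1])
    (Nat.mul_div_le k 2) E
  rw [hE] at hbad
  calc _ ≤ (#{σ | ¬∀ x ∈ E, |sqNorm (Φ *ᵥ signed σ x) - sqNorm x| ≤ 4 * (ε / 4) * sqNorm x} : ℝ) :=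
        Nat.cast_le.2 <| card_le_card <| monotone_filter_right _ fun σ _ hσ hnear =>
          hσ fun x hx => by
            have := abs_sub_le_iff.1 (hnear x hx)
            rw [mulVec_mul_diagonal_bsign]
            constructor <;> linarith
    _ ≤ η * 2 ^ N := by nlinarith [mul_three_mul_exp_neg_le hη hk, pow_pos (two_pos (α := ℝ)) N]
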